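/- An n × n matrix T over an alphabet Σ is bibifix-free if and only if for every r with 1 ≤ r ≤ ⌊n/2⌋, the top-left r × r submatrix of T differs from the bottom-right r × r submatrix of T. -/
import Mathlib


/-- The top-left `r × r` submatrix (biprefix of size `r`) of an `n × n` matrix. -/
def topLeft {α : Type*} {n : ℕ} (T : Matrix (Fin n) (Fin n) α) (r : ℕ) (h : r ≤ n) :
    Matrix (Fin r) (Fin r) α :=
  fun a b => T (Fin.castLE h a) (Fin.castLE h b)

/-- The bottom-right `r × r` submatrix (bisuffix of size `r`) of an `n × n` matrix. -/
def botRight {α : Type*} {n : ℕ} (T : Matrix (Fin n) (Fin n) α) (r : ℕ) (h : r ≤ n) :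
    Matrix (Fin r) (Fin r) α :=
  fun a b => T ⟨n - r + a, by have := a.isLt; omega⟩ ⟨n - r + b, by have := b.isLt; omega⟩

/-- A square matrix is bibifix-free if for all `1 ≤ r < n` its biprefix of size `r`
differs from its bisuffix of size `r`. -/
def BibifixFree {α : Type*} {n : ℕ} (T : Matrix (Fin n) (Fin n) α) : Prop :=
  ∀ (r : ℕ) (_ : 1 ≤ r) (h2 : r < n), topLeft T r h2.le ≠ botRight T r h2.le

lemma key_border {α : Type*} {n : ℕ} (T : Matrix (Fin n) (Fin n) α) :
    ∀ r, 1 ≤ r → ∀ (h2 : r < n), topLeft T r h2.le = botRight T r h2.le →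
      ∃ r', 1 ≤ r' ∧ ∃ (h' : r' ≤ n / 2),
        topLeft T r' (le_trans h' (Nat.div_le_self n 2)) =
          botRight T r' (le_trans h' (Nat.div_le_self n 2)) := by
  intro r
  induction r using Nat.strong_induction_on with
  | _ r IH =>
    intro h1 h2 hEq
    by_cases hr : r ≤ n / 2
    · exact ⟨r, h1, hr, hEq⟩
    · push_neg at hr
      have P : ∀ (a b : Fin r), T (Fin.castLE h2.le a) (Fin.castLE h2.le b) =
          T ⟨n - r + a, by have := a.isLt; omega⟩ ⟨n - r + b, by have := b.isLt; omega⟩ :=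
        fun a b => congrFun (congrFun hEq a) b
      set s := 2 * r - n with hs
      have hsn : s < n := by omega
      have hs1 : 1 ≤ s := by omega
      have hsr : s < r := by omega
      have hEq' : topLeft T s hsn.le = botRight T s hsn.le := by
        funext a b
        have ha := a.isLt
        have hb := b.isLt
        have e1 := P ⟨a, by omega⟩ ⟨b, by omega⟩
        have e2 := P ⟨n - r + a, by omega⟩ ⟨n - r + b, by omega⟩
        simp only [topLeft, botRight, Fin.castLE_mk] at *
        refine e1.trans (e2.trans ?_)
        congr 1 <;> apply Fin.ext <;> simp <;> omega
      exact IH s hsr hs1 hsn hEq'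

theorem stmt_3 {α : Type*} {n : ℕ} (T : Matrix (Fin n) (Fin n) α) :
    BibifixFree T ↔
      ∀ (r : ℕ) (_ : 1 ≤ r) (h2 : r ≤ n / 2),
        topLeft T r (le_trans h2 (Nat.div_le_self n 2)) ≠
          botRight T r (le_trans h2 (Nat.div_le_self n 2)) := by
  constructor
  · intro hB r h1 h2 hEq
    exact hB r h1 (lt_of_le_of_lt h2 (by omega)) hEq
  · intro hH r h1 h2 hEq
    obtain ⟨r', h1', h2', hEq'⟩ := key_border T r h1 h2 hEq
    exact hH r' h1' h2' hEq'
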